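/- Let s ∈ (0,1). For β > 0 let y(β) denote the unique y ∈ (0,1) satisfying (1 − y²)^s = β·y. Then there exist δ > 0 and a sequence of real numbers (a_j)_{j≥1} such that for all β ∈ (0,δ) the series Σ_{j=1}^∞ a_j β^{j/s} converges absolutely and y(β) = 1 − (β^{1/s}/2)·(1 + Σ_{j=1}^∞ a_j β^{j/s}). -/

import Mathlib

/-!
Put `ε = 1 - y` and `t = β ^ (1 / s)`. Taking `s`-th roots, the equation `(1 - y²)^s = β y`
becomes `ε (2 - ε) (1 - ε)^(-1/s) = t`. The left side is analytic at `ε = 0`, vanishes there and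
has derivative `2`, so by the analytic inverse function theorem `ε = φ t` for an analytic `φ` with
`φ 0 = 0`, `φ' 0 = 1/2`. Since `ε ≤ t`, this applies as soon as `β` is small, and the Taylor
series of `φ` at `0`, factored as `φ t = (t / 2) (1 + ∑_{j ≥ 1} a_j t^j)`, is the expansion.
-/

open Filter Topology

section ScalarAnalytic

variable {𝕜 : Type*} [NontriviallyNormedField 𝕜]

theorem AnalyticAt.exists_analyticAt_leftInverse [CompleteSpace 𝕜] {f : 𝕜 → 𝕜} {a : 𝕜}
    (hf : AnalyticAt 𝕜 f a) (hd : deriv f a ≠ 0) :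
    ∃ g : 𝕜 → 𝕜, AnalyticAt 𝕜 g (f a) ∧ g (f a) = a ∧ deriv g (f a) = (deriv f a)⁻¹ ∧
      ∀ᶠ x in 𝓝 a, g (f x) = x := by
  have hf' : HasStrictDerivAt f (deriv f a) a := hf.hasStrictDerivAt
  have hF := hf'.hasStrictFDerivAt_equiv hd
  refine ⟨hF.localInverse f _ a, ?_, hF.localInverse_apply_image,
    (hf'.to_localInverse hd).hasDerivAt.deriv, hF.eventually_left_inverse⟩
  exact (hF.toOpenPartialHomeomorph f).analyticAt_symm' hF.mem_toOpenPartialHomeomorph_source hf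
    hF.hasFDerivAt.fderiv

theorem AnalyticAt.exists_eq_deriv_mul_one_add_tsum {f : 𝕜 → 𝕜} (hf : AnalyticAt 𝕜 f 0)
    (hf0 : f 0 = 0) (hd : deriv f 0 ≠ 0) :
    ∃ r > 0, ∃ b : ℕ → 𝕜, ∀ t : 𝕜, ‖t‖ < r →
      Summable (fun j : ℕ => ‖b (j + 1) * t ^ (j + 1)‖) ∧
      f t = deriv f 0 * t * (1 + ∑' j : ℕ, b (j + 1) * t ^ (j + 1)) := by
  obtain ⟨p, R, hp⟩ := hf
  obtain ⟨r, hr0, hrR⟩ := ENNReal.lt_iff_exists_nnreal_btwn.1 hp.r_pos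
  set d := deriv f 0
  have hd1 : p.coeff 1 = d := hp.hasFPowerSeriesAt.deriv.symm
  refine ⟨r, by exact_mod_cast hr0, fun n => p.coeff (n + 1) / d, fun t ht => ?_⟩
  have htR : t ∈ Metric.eball (0 : 𝕜) R := by
    rw [mem_eball_zero_iff]
    refine lt_trans ?_ hrR
    exact_mod_cast (show ‖t‖₊ < r from ht)
  have hsum : HasSum (fun n => t ^ n * p.coeff n) (f t) := by
    simpa using hp.hasSum htR
  have hnorm : Summable fun n => ‖t ^ n * p.coeff n‖ := by
    simpa using p.summable_norm_apply (Metric.eball_subset_eball hp.r_le htR)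
  have htail : HasSum (fun n => t ^ (n + 2) * p.coeff (n + 2)) (f t - d * t) := by
    have := (hasSum_nat_add_iff' (f := fun n => t ^ n * p.coeff n) 2).2 hsum
    have h0 : p.coeff 0 = 0 := by rw [← hf0]; exact hp.coeff_zero _
    simpa [Finset.sum_range_succ, h0, hd1, mul_comm] using this
  constructor
  · rcases eq_or_ne t 0 with rfl | ht0
    · simp
    · refine ((summable_nat_add_iff 2).2 hnorm).mul_left (‖d * t‖⁻¹) |>.congr fun j => ?_
      rw [← norm_inv, ← norm_mul]
      congr 1
      field_simp
      ring
  · rw [mul_add, mul_one, ← tsum_mul_left, ← sub_eq_iff_eq_add', ← htail.tsum_eq]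
    congr 1 with j
    field_simp
    ring

end ScalarAnalytic

theorem analyticAt_one_sub_rpow (c : ℝ) : AnalyticAt ℝ (fun x : ℝ => (1 - x) ^ c) 0 := by
  have h := Real.one_add_rpow_hasFPowerSeriesAt_zero (a := c) |>.analyticAt
  rw [← neg_zero] at h
  simpa [Function.comp_def, sub_eq_add_neg] using h.comp analyticAt_id.neg

noncomputable def gapProfile (s x : ℝ) : ℝ := x * (2 - x) * (1 - x) ^ (-s⁻¹)

theorem gapProfile_zero (s : ℝ) : gapProfile s 0 = 0 := by simp [gapProfile]

theorem analyticAt_gapProfile (s : ℝ) : AnalyticAt ℝ (gapProfile s) 0 :=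
  (analyticAt_id.mul (analyticAt_const.sub analyticAt_id)).mul (analyticAt_one_sub_rpow _)

theorem deriv_gapProfile_zero (s : ℝ) : deriv (gapProfile s) 0 = 2 := by
  have hpoly : HasDerivAt (fun x : ℝ => x * (2 - x)) 2 0 := by
    have h := (hasDerivAt_id' (0 : ℝ)).mul ((hasDerivAt_id' (0 : ℝ)).const_sub 2)
    norm_num at h
    exact h
  have hpow : HasDerivAt (fun x : ℝ => (1 - x) ^ (-s⁻¹)) (s⁻¹) 0 := by
    simpa using ((hasDerivAt_id (0 : ℝ)).const_sub 1).rpow_const (p := -s⁻¹) (by norm_num)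
  have h : HasDerivAt (gapProfile s) (2 * (1 - 0) ^ (-s⁻¹) + 0 * (2 - 0) * s⁻¹) 0 :=
    hpoly.mul hpow
  simpa using h.deriv

theorem le_gapProfile {s x : ℝ} (hs : 0 < s) (hx0 : 0 ≤ x) (hx1 : x < 1) :
    x ≤ gapProfile s x := by
  have h1 : 1 ≤ (1 - x) ^ (-s⁻¹) :=
    Real.one_le_rpow_of_pos_of_le_one_of_nonpos (by linarith) (by linarith)
      (by simpa using hs.le)
  calc x ≤ x * (2 - x) := by nlinarith
    _ ≤ x * (2 - x) * (1 - x) ^ (-s⁻¹) := le_mul_of_one_le_right (by nlinarith) h1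

theorem gapProfile_one_sub_eq {s β y : ℝ} (hs : 0 < s) (hβ : 0 < β) (hy0 : 0 < y) (hy1 : y < 1)
    (h : (1 - y ^ 2) ^ s = β * y) : gapProfile s (1 - y) = β ^ s⁻¹ := by
  have hsq : 0 ≤ 1 - y ^ 2 := by nlinarith
  have : 1 - y ^ 2 = β ^ s⁻¹ * y ^ s⁻¹ := by
    rw [← Real.mul_rpow hβ.le hy0.le, ← h, Real.rpow_rpow_inv hsq hs.ne']
  rw [gapProfile, sub_sub_cancel, show (1 - y) * (2 - (1 - y)) = 1 - y ^ 2 by ring, this,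
    mul_assoc, ← Real.rpow_add hy0, add_neg_cancel, Real.rpow_zero, mul_one]

theorem stmt_1 (s : ℝ) (hs0 : 0 < s) :
    ∃ δ : ℝ, 0 < δ ∧ ∃ a : ℕ → ℝ,
      ∀ β : ℝ, β ∈ Set.Ioo (0 : ℝ) δ →
        ∀ y : ℝ, y ∈ Set.Ioo (0 : ℝ) 1 → (1 - y ^ 2) ^ s = β * y →
          Summable (fun j : ℕ => |a (j + 1) * β ^ (((j : ℝ) + 1) / s)|) ∧
          y = 1 - (β ^ (1 / s) / 2) *
                (1 + ∑' j : ℕ, a (j + 1) * β ^ (((j : ℝ) + 1) / s)) := by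
  obtain ⟨φ, hφ, hφ0, hφd, hφG⟩ := (analyticAt_gapProfile s).exists_analyticAt_leftInverse
    (by rw [deriv_gapProfile_zero]; norm_num)
  simp only [gapProfile_zero, deriv_gapProfile_zero] at hφ hφ0 hφd
  obtain ⟨r, hr, a, ha⟩ := hφ.exists_eq_deriv_mul_one_add_tsum hφ0 (by rw [hφd]; norm_num)
  obtain ⟨ρ, hρ, hρG⟩ := Metric.eventually_nhds_iff.1 hφG
  refine ⟨min r ρ ^ s, by positivity, a, fun β ⟨hβ0, hβδ⟩ y ⟨hy0, hy1⟩ hy => ?_⟩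
  set t := β ^ s⁻¹ with ht
  have ht0 : 0 < t := by positivity
  have htm : t < min r ρ :=
    (Real.rpow_inv_lt_iff_of_pos hβ0.le (by positivity) hs0).2 hβδ
  have hε : gapProfile s (1 - y) = t := gapProfile_one_sub_eq hs0 hβ0 hy0 hy1 hy
  have hεt : 1 - y ≤ t := hε ▸ le_gapProfile hs0 (by linarith) (by linarith)
  have hφt : φ t = 1 - y := by
    rw [← hε]
    refine hρG ?_
    rw [Real.dist_eq, sub_zero, abs_of_pos (by linarith)]
    linarith [min_le_right r ρ]
  have hpow (j : ℕ) : β ^ (((j : ℝ) + 1) / s) = t ^ (j + 1) := by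
    rw [← Real.rpow_mul_natCast hβ0.le]
    push_cast
    ring_nf
  obtain ⟨hsum, heq⟩ :=
    ha t (by rw [Real.norm_eq_abs, abs_of_pos ht0]; linarith [min_le_left r ρ])
  simp only [Real.norm_eq_abs] at hsum
  rw [hφd, hφt] at heq
  simp only [hpow, one_div, ← ht]
  exact ⟨hsum, by linear_combination -heq⟩
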